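/- The Hermitian variables are expressed through the twistor vectors: for every X ∈ ℝ⁸ and every i ∈ {0,…,7}, Z_i = Σ_{j=0}^{7} J_i(e_j) ⊗ ι(X_j) in 𝕆 ⊗ Cl₈. -/

import Mathlib

noncomputable section

open scoped Quaternion TensorProduct

/-- The octonions, realized as the Cayley–Dickson double of the quaternions. -/
def Oct : Type := ℍ × ℍ

namespace Oct

instance : AddCommGroup Oct := inferInstanceAs (AddCommGroup (ℍ × ℍ))
instance : Module ℝ Oct := inferInstanceAs (Module ℝ (ℍ × ℍ))

/-- First (quaternionic) component. -/
def x (p : Oct) : ℍ := Prod.fst p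
/-- Second (quaternionic) component. -/
def y (p : Oct) : ℍ := Prod.snd p
/-- Build an octonion from two quaternions. -/
def mk (a b : ℍ) : Oct := ((a, b) : ℍ × ℍ)

@[simp] lemma x_mk (a b : ℍ) : (mk a b).x = a := rfl
@[simp] lemma y_mk (a b : ℍ) : (mk a b).y = b := rfl
@[simp] lemma x_add (p q : Oct) : (p + q).x = p.x + q.x := rfl
@[simp] lemma y_add (p q : Oct) : (p + q).y = p.y + q.y := rfl
@[simp] lemma x_smul (r : ℝ) (p : Oct) : (r • p).x = r • p.x := rfl
@[simp] lemma y_smul (r : ℝ) (p : Oct) : (r • p).y = r • p.y := rfl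
@[simp] lemma x_zero : (0 : Oct).x = 0 := rfl
@[simp] lemma y_zero : (0 : Oct).y = 0 := rfl

@[ext] lemma ext {p q : Oct} (h1 : p.x = q.x) (h2 : p.y = q.y) : p = q :=
  Prod.ext h1 h2

/-- Cayley–Dickson multiplication: `(a,b)·(c,d) = (a·c − conj(d)·b, d·a + b·conj(c))`. -/
instance : Mul Oct :=
  ⟨fun p q => mk (p.x * q.x - star q.y * p.y) (q.y * p.x + p.y * star q.x)⟩

instance : One Oct := ⟨mk 1 0⟩

@[simp] lemma x_mul (p q : Oct) : (p * q).x = p.x * q.x - star q.y * p.y := rfl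
@[simp] lemma y_mul (p q : Oct) : (p * q).y = q.y * p.x + p.y * star q.x := rfl
@[simp] lemma x_one : (1 : Oct).x = 1 := rfl
@[simp] lemma y_one : (1 : Oct).y = 0 := rfl

instance : NonUnitalNonAssocRing Oct :=
  { (inferInstance : AddCommGroup Oct) with
    mul := (· * ·)
    left_distrib := by
      intro p q r
      refine ext ?_ ?_ <;>
        simp only [x_mul, y_mul, x_add, y_add, star_add] <;> noncomm_ring
    right_distrib := by
      intro p q r
      refine ext ?_ ?_ <;>
        simp only [x_mul, y_mul, x_add, y_add, star_add] <;> noncomm_ring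
    zero_mul := by
      intro p
      refine ext ?_ ?_ <;> simp only [x_mul, y_mul, x_zero, y_zero, star_zero] <;> simp
    mul_zero := by
      intro p
      refine ext ?_ ?_ <;> simp only [x_mul, y_mul, x_zero, y_zero, star_zero] <;> simp }

instance : SMulCommClass ℝ Oct Oct where
  smul_comm r p q := by
    show r • (p * q) = p * (r • q)
    refine ext ?_ ?_ <;>
      simp [x_mul, y_mul, smul_sub, smul_add, mul_smul_comm, smul_mul_assoc,
        star_smul, star_trivial]

instance : IsScalarTower ℝ Oct Oct where
  smul_assoc r p q := by
    show (r • p) * q = r • (p * q)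
    refine ext ?_ ?_ <;>
      simp [x_mul, y_mul, smul_sub, smul_add, mul_smul_comm, smul_mul_assoc,
        star_smul, star_trivial]

/-- Octonionic conjugation: `conj (a,b) = (conj a, −b)`. -/
def conj (p : Oct) : Oct := mk (star p.x) (-p.y)

/-- The real part of an octonion. -/
def re (p : Oct) : ℝ := p.x.re

/-- The standard basis `e_0, …, e_7` of the octonions. -/
def e : Fin 8 → Oct :=
  ![mk 1 0, mk ⟨0, 1, 0, 0⟩ 0, mk ⟨0, 0, 1, 0⟩ 0, mk ⟨0, 0, 0, 1⟩ 0,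
    mk 0 1, mk 0 ⟨0, 1, 0, 0⟩, mk 0 ⟨0, 0, 1, 0⟩, mk 0 ⟨0, 0, 0, 1⟩]

/-- The real coordinates of an octonion with respect to the standard basis. -/
def coord : Fin 8 → Oct → ℝ :=
  ![fun p => p.x.re, fun p => p.x.imI, fun p => p.x.imJ, fun p => p.x.imK,
    fun p => p.y.re, fun p => p.y.imI, fun p => p.y.imJ, fun p => p.y.imK]

lemma coord_add (j : Fin 8) (p q : Oct) :
    coord j (p + q) = coord j p + coord j q := by fin_cases j <;> rfl

lemma coord_smul (j : Fin 8) (r : ℝ) (p : Oct) :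
    coord j (r • p) = r * coord j p := by fin_cases j <;> rfl

/-- The binary "dot product" `⟨i,j⟩ = i₁j₁ + i₂j₂ + i₃j₃` of binary digits. -/
def bdot (i j : Fin 8) : ℕ :=
  ((i.val.testBit 0 && j.val.testBit 0).toNat +
   (i.val.testBit 1 && j.val.testBit 1).toNat +
   (i.val.testBit 2 && j.val.testBit 2).toNat) % 2

/-- The involution `J_i`, the ℝ-linear map determined by `J_i(e_j) = (−1)^{⟨i,j⟩} e_j`. -/
def J (i : Fin 8) : Oct →ₗ[ℝ] Oct where
  toFun p := ∑ j : Fin 8, ((-1 : ℝ) ^ bdot i j * coord j p) • e j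
  map_add' p q := by
    simp only [coord_add, mul_add, add_smul]
    rw [Finset.sum_add_distrib]
  map_smul' r p := by
    simp only [coord_smul, RingHom.id_apply, Finset.smul_sum, smul_smul, mul_left_comm]

/-- The sign `σ(j,i)` defined by `J_j(conj e_i) = (−1)^{σ(j,i)} e_i`. -/
def sigma (j i : Fin 8) : ℕ := if i = 0 then 0 else (bdot j i + 1) % 2

end Oct
namespace Oct

@[simp] lemma e_0 : e 0 = mk 1 0 := rfl
@[simp] lemma e_1 : e 1 = mk ⟨0, 1, 0, 0⟩ 0 := rfl
@[simp] lemma e_2 : e 2 = mk ⟨0, 0, 1, 0⟩ 0 := rfl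
@[simp] lemma e_3 : e 3 = mk ⟨0, 0, 0, 1⟩ 0 := rfl
@[simp] lemma e_4 : e 4 = mk 0 1 := rfl
@[simp] lemma e_5 : e 5 = mk 0 ⟨0, 1, 0, 0⟩ := rfl
@[simp] lemma e_6 : e 6 = mk 0 ⟨0, 0, 1, 0⟩ := rfl
@[simp] lemma e_7 : e 7 = mk 0 ⟨0, 0, 0, 1⟩ := rfl

@[simp] lemma coord_0 (p : Oct) : coord 0 p = p.x.re := rfl
@[simp] lemma coord_1 (p : Oct) : coord 1 p = p.x.imI := rfl
@[simp] lemma coord_2 (p : Oct) : coord 2 p = p.x.imJ := rfl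
@[simp] lemma coord_3 (p : Oct) : coord 3 p = p.x.imK := rfl
@[simp] lemma coord_4 (p : Oct) : coord 4 p = p.y.re := rfl
@[simp] lemma coord_5 (p : Oct) : coord 5 p = p.y.imI := rfl
@[simp] lemma coord_6 (p : Oct) : coord 6 p = p.y.imJ := rfl
@[simp] lemma coord_7 (p : Oct) : coord 7 p = p.y.imK := rfl

lemma coord_e (l m : Fin 8) : coord l (e m) = if l = m then 1 else 0 := by
  fin_cases l <;> fin_cases m <;> rfl

lemma sum_coord_smul_e (p : Oct) : ∑ l : Fin 8, coord l p • e l = p := by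
  have key : ∀ k : Fin 8, coord k (∑ l : Fin 8, coord l p • e l) = coord k p := by
    intro k
    simp only [Fin.sum_univ_eight, coord_add, coord_smul, coord_e]
    fin_cases k <;> simp
  exact ext (Quaternion.ext _ _ (key 0) (key 1) (key 2) (key 3))
    (Quaternion.ext _ _ (key 4) (key 5) (key 6) (key 7))

end Oct

/-- The ℝ-linear isomorphism `Φ : ℝ⁸ → 𝕆` with `Φ(b_l) = e_l`. -/
def Phi : EuclideanSpace ℝ (Fin 8) ≃ₗ[ℝ] Oct where
  toFun v := ∑ l : Fin 8, v l • Oct.e l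
  map_add' u v := by
    simp only [PiLp.add_apply, add_smul]
    rw [Finset.sum_add_distrib]
  map_smul' r v := by
    simp only [PiLp.smul_apply, smul_eq_mul, RingHom.id_apply, Finset.smul_sum, smul_smul]
  invFun p := (WithLp.toLp 2 (fun l => Oct.coord l p) : EuclideanSpace ℝ (Fin 8))
  left_inv v := by
    ext l
    fin_cases l <;>
      simp [Fin.sum_univ_eight, Oct.coord_add, Oct.coord_smul, Oct.coord_e] <;>
        dsimp only [Oct.mk, Oct.x, Oct.y] <;> simp
  right_inv p := Oct.sum_coord_smul_e p

/-- The quadratic form `Q(v) = −‖v‖²` on ℝ⁸. -/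
def Q8 : QuadraticForm ℝ (EuclideanSpace ℝ (Fin 8)) :=
  - LinearMap.BilinMap.toQuadraticMap
      (innerₗ (EuclideanSpace ℝ (Fin 8)) : LinearMap.BilinForm ℝ (EuclideanSpace ℝ (Fin 8)))

/-- The Clifford algebra `Cl₈` of `Q(v) = −‖v‖²` on ℝ⁸. -/
abbrev Cl8 := CliffordAlgebra Q8

/-- The Clifford generators `g_l := ι(b_l)`. -/
def g (l : Fin 8) : Cl8 := CliffordAlgebra.ι Q8 (EuclideanSpace.single l 1)

/-- The extension `J_j ⊗ id` of `J_j` to `𝕆 ⊗ Cl₈`. -/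
def JT (j : Fin 8) : Oct ⊗[ℝ] Cl8 →ₗ[ℝ] Oct ⊗[ℝ] Cl8 :=
  TensorProduct.map (Oct.J j) LinearMap.id

/-- The element `Ω := Σᵢ conj(eᵢ) ⊗ gᵢ` of `𝕆 ⊗ Cl₈`. -/
def Omega : Oct ⊗[ℝ] Cl8 := ∑ i : Fin 8, (Oct.e i).conj ⊗ₜ[ℝ] g i

/-- The octonionic Witt basis `f_j := (J_j ⊗ id)(Ω)`. -/
def f (j : Fin 8) : Oct ⊗[ℝ] Cl8 := JT j Omega

/-- The twistor vectors `X_i := Φ⁻¹(Φ(X)·conj(e_i))`. -/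
def Xtw (X : EuclideanSpace ℝ (Fin 8)) (i : Fin 8) : EuclideanSpace ℝ (Fin 8) :=
  Phi.symm (Phi X * (Oct.e i).conj)

/-- The Hermitian variables `Z_j := (J_j ⊗ id)(Ω·(Φ(X) ⊗ 1))`. -/
def Z (X : EuclideanSpace ℝ (Fin 8)) (j : Fin 8) : Oct ⊗[ℝ] Cl8 :=
  JT j (Omega * (Phi X ⊗ₜ[ℝ] (1 : Cl8)))

/-!
Expanding `ι` in the generators `g_l`, both sides become double sums over `j, l` of
`J_i(e_j) ⊗ g_l` with coefficients `coord_l(Φ(X)·conj(e_j))` and `coord_j(conj(e_l)·Φ(X))`.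
These agree because, for the Euclidean inner product of `𝕆`, left and right multiplication
by `q` are adjoint to multiplication by `conj q`; this survives the non-associativity of the
Cayley–Dickson product since each identity only involves two factors.
-/

namespace Oct

def dot (p q : Oct) : ℝ := (p.x * star q.x).re + (p.y * star q.y).re

lemma dot_mul_right (p q r : Oct) : dot (p * q) r = dot p (r * q.conj) := by
  simp [dot, conj, Quaternion.re_mul, Quaternion.imI_mul, Quaternion.imJ_mul,
    Quaternion.imK_mul]
  ring

lemma dot_mul_left (p q r : Oct) : dot (p * q) r = dot q (p.conj * r) := by
  simp [dot, conj, Quaternion.re_mul, Quaternion.imI_mul, Quaternion.imJ_mul,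
    Quaternion.imK_mul]
  ring

@[simp] lemma conj_conj (p : Oct) : p.conj.conj = p := by
  refine ext ?_ ?_ <;> simp [conj]

lemma coord_eq_dot (l : Fin 8) (p : Oct) : coord l p = dot p (e l) := by
  fin_cases l <;>
    simp [dot, Quaternion.re_mul, Quaternion.re_star, Quaternion.imI_star,
      Quaternion.imJ_star, Quaternion.imK_star] <;>
      dsimp only [mk, x, y] <;> simp

lemma coord_mul_conj_e (l j : Fin 8) (p : Oct) :
    coord l (p * (e j).conj) = coord j ((e l).conj * p) := by
  rw [coord_eq_dot, coord_eq_dot, dot_mul_right, dot_mul_left, conj_conj, conj_conj]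

lemma conj_e_mul_eq_sum (l : Fin 8) (p : Oct) :
    (e l).conj * p = ∑ j, coord l (p * (e j).conj) • e j := by
  simp only [coord_mul_conj_e]
  exact (sum_coord_smul_e _).symm

end Oct

lemma TensorProduct.sum_tmul_sum_smul {R M N ι κ : Type*} [CommSemiring R]
    [AddCommMonoid M] [Module R M] [AddCommMonoid N] [Module R N] [Fintype ι] [Fintype κ]
    (a : ι → M) (b : κ → N) (c : ι → κ → R) :
    ∑ i, a i ⊗ₜ[R] (∑ k, c i k • b k) = ∑ k, (∑ i, c i k • a i) ⊗ₜ[R] b k := by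
  simp only [TensorProduct.tmul_sum, TensorProduct.sum_tmul, TensorProduct.tmul_smul,
    TensorProduct.smul_tmul']
  exact Finset.sum_comm

lemma iota_phi_symm_eq_sum (p : Oct) :
    CliffordAlgebra.ι Q8 (Phi.symm p) = ∑ l, Oct.coord l p • g l := by
  conv_lhs => rw [← (EuclideanSpace.basisFun (Fin 8) ℝ).sum_repr (Phi.symm p)]
  simp [g, Phi]

lemma Omega_mul_tmul_one (p : Oct) :
    Omega * (p ⊗ₜ[ℝ] (1 : Cl8)) = ∑ l, ((Oct.e l).conj * p) ⊗ₜ[ℝ] g l := by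
  simp only [Omega, Finset.sum_mul, Algebra.TensorProduct.tmul_mul_tmul, mul_one]

lemma map_Omega_mul_tmul_one (T : Oct →ₗ[ℝ] Oct) (p : Oct) :
    TensorProduct.map T LinearMap.id (Omega * (p ⊗ₜ[ℝ] (1 : Cl8)))
      = ∑ j, T (Oct.e j) ⊗ₜ[ℝ] CliffordAlgebra.ι Q8 (Phi.symm (p * (Oct.e j).conj)) := by
  simp only [iota_phi_symm_eq_sum, TensorProduct.sum_tmul_sum_smul, Omega_mul_tmul_one,
    map_sum, map_smul, TensorProduct.map_tmul, LinearMap.id_apply, Oct.conj_e_mul_eq_sum]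

/-- The Hermitian variables in terms of the twistor vectors:
`Zᵢ = Σⱼ Jᵢ(eⱼ) ⊗ ι(Xⱼ)`. -/
theorem hermitian_from_twistor (X : EuclideanSpace ℝ (Fin 8)) (i : Fin 8) :
    Z X i = ∑ j : Fin 8, Oct.J i (Oct.e j) ⊗ₜ[ℝ] CliffordAlgebra.ι Q8 (Xtw X j) :=
  map_Omega_mul_tmul_one (Oct.J i) (Phi X)
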